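/- arXiv:2510.21562 — 2 statements merged into one kernel-verified Lean document; each statement's English description precedes it below -/
import Mathlib

section
/- Let V be a finite-dimensional real vector space, η a nondegenerate symmetric bilinear form on V, and u an endomorphism of V which is self-adjoint with respect to η and all of whose (real) eigenvalues are positive. Then the symmetric bilinear form (x, y) ↦ η(x, u y) is nondegenerate and has the same signature as η. -/
/-!
All eigenvalues of `u` are positive, so `X` has a square root modulo the minimal polynomial of `u`:
modulo an irreducible factor one evaluates at a complex root, lifts to prime powers by Newton's
iteration and glues by the Chinese remainder theorem. Hence `u = s²` with `s` a polynomial in `u`;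
such an `s` is `η`-self-adjoint and invertible, and `η x (u y) = η (s x) (s y)` exhibits the new
form as the pullback of `η` along an automorphism of `V`.
-/

open Module

/-- The positive index of inertia: the maximal dimension of a subspace on which the
bilinear form is positive definite. -/
noncomputable def posIndex {V : Type*} [AddCommGroup V] [Module ℝ V]
    (B : V →ₗ[ℝ] V →ₗ[ℝ] ℝ) : ℕ :=
  sSup {n : ℕ | ∃ W : Submodule ℝ V, Module.finrank ℝ W = n ∧ ∀ x ∈ W, x ≠ 0 → 0 < B x x}

/-- The negative index of inertia: the maximal dimension of a subspace on which the
bilinear form is negative definite. -/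
noncomputable def negIndex {V : Type*} [AddCommGroup V] [Module ℝ V]
    (B : V →ₗ[ℝ] V →ₗ[ℝ] ℝ) : ℕ :=
  sSup {n : ℕ | ∃ W : Submodule ℝ V, Module.finrank ℝ W = n ∧ ∀ x ∈ W, x ≠ 0 → B x x < 0}

/-- The signature `(s₊, s₋)` of a bilinear form. -/
noncomputable def signature {V : Type*} [AddCommGroup V] [Module ℝ V]
    (B : V →ₗ[ℝ] V →ₗ[ℝ] ℝ) : ℕ × ℕ :=
  (posIndex B, negIndex B)

open Polynomial

section SquareRootModulo

variable {R : Type*} [CommRing R]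

theorem exists_mul_dvd_sq_sub {a b c p₁ p₂ : R} (hbc : IsCoprime b c)
    (h₁ : b ∣ p₁ ^ 2 - a) (h₂ : c ∣ p₂ ^ 2 - a) : ∃ p, b * c ∣ p ^ 2 - a := by
  have ⟨u, v, huv⟩ := hbc
  have lift {d p' : R} (p : R) (hd : d ∣ p - p') (h : d ∣ p' ^ 2 - a) : d ∣ p ^ 2 - a := by
    have : p ^ 2 - a = (p - p') * (p + p') + (p' ^ 2 - a) := by ring
    exact this ▸ dvd_add (hd.mul_right _) h
  refine ⟨p₂ * u * b + p₁ * v * c, hbc.mul_dvd (lift _ ⟨(p₂ - p₁) * u, ?_⟩ h₁)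
    (lift _ ⟨(p₁ - p₂) * v, ?_⟩ h₂)⟩
  · linear_combination p₁ * huv
  · linear_combination p₂ * huv

/-- Hensel lifting of a square root along `q`, by Newton's iteration `p ↦ p + (a - p²) / 2p`. -/
theorem exists_pow_succ_dvd_sq_sub (h2 : IsUnit (2 : R)) {a q p₀ : R} (hp₀ : q ∣ p₀ ^ 2 - a)
    (hcop : IsCoprime p₀ q) (n : ℕ) : ∃ p, q ^ (n + 1) ∣ p ^ 2 - a ∧ IsCoprime p q := by
  induction n with
  | zero => exact ⟨p₀, by simpa using hp₀, hcop⟩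
  | succ n ih =>
    obtain ⟨p, ⟨r, hr⟩, hp⟩ := ih
    obtain ⟨α, β, hαβ⟩ := (isCoprime_mul_unit_left_left h2 p _).mpr (hp.pow_right (n := n + 1))
    refine ⟨p + -(α * q ^ n * r) * q, ⟨q ^ n * r * (β + α ^ 2 * r), ?_⟩,
      hp.add_mul_right_left _⟩
    linear_combination hr - q ^ (n + 1) * r * hαβ

end SquareRootModulo

theorem Complex.aeval_surjective_of_im_ne_zero {z : ℂ} (hz : z.im ≠ 0) :
    Function.Surjective (aeval z : ℝ[X] →ₐ[ℝ] ℂ) := by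
  intro w
  refine ⟨C (w.im / z.im) * X + C (w.re - w.im / z.im * z.re), Complex.ext ?_ ?_⟩ <;>
    simp [field]

/-- Divisibility by `q` is detected by evaluation at a complex root `z` of `q`, and a square root
of `z` is the value at `z` of a real polynomial: a constant if `z` is real, an affine one
otherwise. -/
theorem Irreducible.exists_dvd_sq_sub_X {q : ℝ[X]} (hq : Irreducible q)
    (hroots : ∀ x : ℝ, q.IsRoot x → 0 < x) : ∃ p : ℝ[X], q ∣ p ^ 2 - X := by
  obtain ⟨z, hz⟩ := IsAlgClosed.exists_aeval_eq_zero ℂ q (degree_pos_of_irreducible hq).ne'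
  suffices ∃ p : ℝ[X], aeval z p ^ 2 = z by
    obtain ⟨p, hp⟩ := this
    exact ⟨p, (hq.dvd_iff_aeval_eq_zero hz).mp (by simp [hp])⟩
  by_cases him : z.im = 0
  · obtain ⟨x, rfl⟩ : ∃ x : ℝ, z = x := ⟨z.re, Complex.ext rfl him⟩
    have hx : 0 < x := hroots x (Complex.ofReal_eq_zero.mp ((ofReal_eval q x).trans hz))
    exact ⟨C √x, by simp [← Complex.ofReal_pow, Real.sq_sqrt hx.le]⟩
  · obtain ⟨w, hw⟩ := IsAlgClosed.exists_eq_mul_self z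
    obtain ⟨p, hp⟩ := Complex.aeval_surjective_of_im_ne_zero him w
    exact ⟨p, by rw [hp, sq, hw]⟩

theorem Polynomial.exists_dvd_sq_sub_X {m : ℝ[X]} (hm : ∀ x : ℝ, m.IsRoot x → 0 < x) :
    ∃ p : ℝ[X], m ∣ p ^ 2 - X := by
  induction m using UniqueFactorizationMonoid.induction_on_coprime with
  | h0 => exact (hm 0 (by simp)).false.elim
  | h1 hunit => exact ⟨0, hunit.dvd⟩
  | @hpr q i hq =>
    rcases i.eq_zero_or_pos with rfl | hi
    · exact ⟨0, by simp⟩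
    have hroots (x : ℝ) (hx : q.IsRoot x) : 0 < x := hm x (hx.dvd (dvd_pow_self q hi.ne'))
    obtain ⟨p₀, hp₀⟩ := hq.irreducible.exists_dvd_sq_sub_X hroots
    have hcop : IsCoprime p₀ q := by
      rw [isCoprime_comm, hq.coprime_iff_not_dvd]
      intro hdvd
      have hqX : q ∣ X := sub_sub_cancel (p₀ ^ 2) X ▸ dvd_sub (dvd_pow hdvd two_ne_zero) hp₀
      have hXq : X ∣ q := hq.irreducible.dvd_symm irreducible_X hqX
      exact (hroots 0 (by simpa [X_dvd_iff, coeff_zero_eq_eval_zero] using hXq)).false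
    have h2 : IsUnit (2 : ℝ[X]) := by
      rw [← C_ofNat]; exact isUnit_C.mpr (by norm_num)
    obtain ⟨p, hp, -⟩ := exists_pow_succ_dvd_sq_sub h2 hp₀ hcop i
    exact ⟨p, (pow_dvd_pow q i.le_succ).trans hp⟩
  | @hcp a b hab iha ihb =>
    have hroots {c : ℝ[X]} (hc : c ∣ a * b) (x : ℝ) (hx : c.IsRoot x) : 0 < x := hm x (hx.dvd hc)
    obtain ⟨p₁, hp₁⟩ := iha (hroots (dvd_mul_right a b))
    obtain ⟨p₂, hp₂⟩ := ihb (hroots (dvd_mul_left b a))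
    exact exists_mul_dvd_sq_sub hab.isCoprime hp₁ hp₂

theorem Module.End.exists_aeval_sq_eq_self {V : Type*} [AddCommGroup V] [Module ℝ V]
    [FiniteDimensional ℝ V] {u : Module.End ℝ V} (heig : ∀ c : ℝ, u.HasEigenvalue c → 0 < c) :
    ∃ p : ℝ[X], aeval u p ^ 2 = u := by
  obtain ⟨p, hp⟩ := exists_dvd_sq_sub_X fun x hx ↦ heig x (hasEigenvalue_iff_isRoot.mpr hx)
  refine ⟨p, sub_eq_zero.mp ?_⟩
  simpa using minpoly.dvd_iff.mp hp

namespace LinearMap.IsAdjointPair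

variable {R M N : Type*} [CommRing R] [AddCommGroup M] [Module R M] [AddCommGroup N]
  [Module R N] {B : M →ₗ[R] M →ₗ[R] N} {f : Module.End R M}

theorem pow (hf : IsAdjointPair B B f f) (n : ℕ) : IsAdjointPair B B ⇑(f ^ n) ⇑(f ^ n) := by
  induction n with
  | zero => exact isAdjointPair_one
  | succ n ih => simpa only [← pow_succ, ← pow_succ'] using ih.mul hf

theorem aeval (hf : IsAdjointPair B B f f) (p : R[X]) :
    IsAdjointPair B B ⇑(aeval f p) ⇑(aeval f p) := by
  induction p using Polynomial.induction_on' with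
  | add p q hp hq => rw [map_add]; exact hp.add hq
  | monomial n a =>
    simpa only [aeval_monomial, ← Algebra.smul_def, coe_smul] using (hf.pow n).smul a

end LinearMap.IsAdjointPair

section Signature

variable {V W : Type*} [AddCommGroup V] [Module ℝ V] [AddCommGroup W] [Module ℝ W]

def definiteDims (B : V →ₗ[ℝ] V →ₗ[ℝ] ℝ) (P : ℝ → Prop) : Set ℕ :=
  {n | ∃ S : Submodule ℝ V, finrank ℝ S = n ∧ ∀ x ∈ S, x ≠ 0 → P (B x x)}

theorem definiteDims_compl₁₂_subset (B : W →ₗ[ℝ] W →ₗ[ℝ] ℝ) (e : V ≃ₗ[ℝ] W) (P : ℝ → Prop) :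
    definiteDims (B.compl₁₂ (e : V →ₗ[ℝ] W) e) P ⊆ definiteDims B P := by
  rintro _ ⟨S, rfl, hS⟩
  refine ⟨S.map (e : V →ₗ[ℝ] W), e.finrank_map_eq S, ?_⟩
  rintro _ ⟨x, hx, rfl⟩ hx0
  exact hS x hx (by simpa using hx0)

theorem definiteDims_compl₁₂ (B : W →ₗ[ℝ] W →ₗ[ℝ] ℝ) (e : V ≃ₗ[ℝ] W) (P : ℝ → Prop) :
    definiteDims (B.compl₁₂ (e : V →ₗ[ℝ] W) e) P = definiteDims B P := by
  refine (definiteDims_compl₁₂_subset B e P).antisymm ?_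
  have hB : (B.compl₁₂ (e : V →ₗ[ℝ] W) e).compl₁₂ (e.symm : W →ₗ[ℝ] V) (e.symm : W →ₗ[ℝ] V) =
      B := by
    ext; simp
  simpa only [hB] using definiteDims_compl₁₂_subset (B.compl₁₂ (e : V →ₗ[ℝ] W) e) e.symm P

theorem signature_compl₁₂ (B : W →ₗ[ℝ] W →ₗ[ℝ] ℝ) (e : V ≃ₗ[ℝ] W) :
    signature (B.compl₁₂ (e : V →ₗ[ℝ] W) e) = signature B := by
  change (sSup (definiteDims _ (0 < ·)), sSup (definiteDims _ (· < 0))) =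
    (sSup (definiteDims B (0 < ·)), sSup (definiteDims B (· < 0)))
  rw [definiteDims_compl₁₂, definiteDims_compl₁₂]

end Signature

theorem stmt_0_general {V : Type*} [AddCommGroup V] [Module ℝ V] [FiniteDimensional ℝ V]
    (η : V →ₗ[ℝ] V →ₗ[ℝ] ℝ)
    (hnd : ∀ x : V, (∀ y : V, η x y = 0) → x = 0)
    (u : V →ₗ[ℝ] V)
    (hsa : ∀ x y, η (u x) y = η x (u y))
    (heig : ∀ c : ℝ, Module.End.HasEigenvalue u c → 0 < c) :
    (∀ x : V, (∀ y : V, η x (u y) = 0) → x = 0) ∧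
      signature (η.compl₂ u) = signature η := by
  obtain ⟨p, hp⟩ := Module.End.exists_aeval_sq_eq_self heig
  have hu : Function.Injective u := LinearMap.ker_eq_bot.mp <|
    ((LinearMap.not_hasEigenvalue_zero_tfae u).out 0 4).mp fun h ↦ (heig 0 h).false
  have hs : Function.Injective (aeval u p) := by
    rw [← hp, sq, Module.End.coe_mul] at hu
    exact hu.of_comp
  let e := LinearEquiv.ofInjectiveEndo (aeval u p) hs
  have hη : η.compl₂ u = η.compl₁₂ (e : V →ₗ[ℝ] V) e := by
    ext x y
    have hu2 : u y = aeval u p (aeval u p y) := by rw [← Module.End.mul_apply, ← sq, hp]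
    simp only [LinearMap.compl₂_apply, LinearMap.compl₁₂_apply, hu2]
    exact (LinearMap.IsAdjointPair.aeval hsa p x _).symm
  refine ⟨fun x hx ↦ hnd x fun y ↦ ?_, hη ▸ signature_compl₁₂ η e⟩
  obtain ⟨y, rfl⟩ := LinearMap.injective_iff_surjective.mp hu y
  exact hx y

theorem stmt_0 {V : Type*} [AddCommGroup V] [Module ℝ V] [FiniteDimensional ℝ V]
    (η : V →ₗ[ℝ] V →ₗ[ℝ] ℝ)
    (hsymm : ∀ x y, η x y = η y x)
    (hnd : ∀ x : V, (∀ y : V, η x y = 0) → x = 0)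
    (u : V →ₗ[ℝ] V)
    (hsa : ∀ x y, η (u x) y = η x (u y))
    (heig : ∀ c : ℝ, Module.End.HasEigenvalue u c → 0 < c) :
    (∀ x : V, (∀ y : V, η x (u y) = 0) → x = 0) ∧
      signature (η.compl₂ u) = signature η :=
  stmt_0_general η hnd u hsa heig
end

section
/- For λ ∈ [0,1], let u_λ = λ·u + (1-λ)·id, where u is self-adjoint with respect to a nondegenerate symmetric bilinear form η on a finite-dimensional real vector space and has only positive eigenvalues. Then for every λ ∈ [0,1], u_λ is invertible and the bilinear form η_λ(x,y) = η(x, u_λ y) is a nondegenerate symmetric bilinear form. -/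
theorem stmt_1 {V : Type*} [AddCommGroup V] [Module ℝ V] [FiniteDimensional ℝ V]
    (η : V →ₗ[ℝ] V →ₗ[ℝ] ℝ)
    (hsymm : ∀ x y, η x y = η y x)
    (hnd : ∀ x : V, (∀ y : V, η x y = 0) → x = 0)
    (u : V →ₗ[ℝ] V)
    (hsa : ∀ x y, η (u x) y = η x (u y))
    (heig : ∀ c : ℝ, Module.End.HasEigenvalue u c → 0 < c) :
    ∀ l : ℝ, l ∈ Set.Icc (0 : ℝ) 1 →
      Function.Bijective (l • u + (1 - l) • (LinearMap.id : V →ₗ[ℝ] V)) ∧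
      (∀ x y : V, η x ((l • u + (1 - l) • (LinearMap.id : V →ₗ[ℝ] V)) y) =
        η y ((l • u + (1 - l) • (LinearMap.id : V →ₗ[ℝ] V)) x)) ∧
      (∀ x : V, (∀ y : V, η x ((l • u + (1 - l) • (LinearMap.id : V →ₗ[ℝ] V)) y) = 0) →
        x = 0) := by
  intro l hl
  obtain ⟨hl0, hl1⟩ := hl
  set f : V →ₗ[ℝ] V := l • u + (1 - l) • (LinearMap.id : V →ₗ[ℝ] V) with hf
  have hfapp : ∀ x, f x = l • u x + (1 - l) • x := by
    intro x; simp [hf]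
  -- injectivity
  have hinj : Function.Injective f := by
    rw [← LinearMap.ker_eq_bot, LinearMap.ker_eq_bot']
    intro x hx
    by_contra hxne
    rw [hfapp] at hx
    rcases eq_or_lt_of_le hl0 with h0 | hpos
    · rw [← h0] at hx
      simp at hx
      exact hxne hx
    · have hux : u x = ((l - 1) / l) • x := by
        have : l • u x = (l - 1) • x := by
          have := hx
          rw [add_eq_zero_iff_eq_neg] at this
          rw [this, ← neg_smul]; ring_nf
        have := congrArg (fun v => (l⁻¹ : ℝ) • v) this
        simpa [smul_smul, inv_mul_cancel₀ (ne_of_gt hpos), div_eq_inv_mul,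
          mul_comm] using this
      have hev : Module.End.HasEigenvalue u ((l - 1) / l) := by
        apply Module.End.hasEigenvalue_of_hasEigenvector (x := x)
        exact ⟨Module.End.mem_eigenspace_iff.mpr hux, hxne⟩
      have := heig _ hev
      have : (0:ℝ) < l - 1 := by
        have := (div_pos_iff.mp this)
        rcases this with ⟨h, _⟩ | ⟨_, h⟩
        · linarith
        · linarith
      linarith
  have hbij : Function.Bijective f := ⟨hinj, LinearMap.injective_iff_surjective.mp hinj⟩
  refine ⟨hbij, ?_, ?_⟩
  · intro x y
    rw [hfapp, hfapp]
    simp only [map_add, map_smul, smul_eq_mul]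
    rw [← hsa x y, hsymm (u x) y, hsymm x y]
  · intro x hx
    apply hnd
    intro y
    obtain ⟨z, hz⟩ := hbij.2 y
    rw [← hz]
    exact hx z
end
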